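/- For t < 29/12, the polynomial F(x,y,t) = 2(x⁴+y⁴) + (8/3)(x³+y³) + 4x²y² + 20 − 8t is strictly positive for all real (x,y), while for t = 29/12 there exists a point where F vanishes. -/

import Mathlib

/-- F(x,y,t) = 2(x⁴+y⁴) + (8/3)(x³+y³) + 4x²y² + 20 − 8t -/
noncomputable def Fnv (t x y : ℝ) : ℝ :=
  2*(x^4+y^4) + (8/3)*(x^3+y^3) + 4*x^2*y^2 + 20 - 8*t

theorem Fnv_eq_add (s t x y : ℝ) : Fnv t x y = Fnv s x y + 8 * (s - t) := by
  unfold Fnv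
  ring

theorem three_mul_Fnv_eq_sum_sq (x y : ℝ) :
    3 * Fnv (29/12) x y =
      4 * (x^2 + x)^2 + 4 * (y^2 + y)^2 + 2 * (x^2 + y^2 - 1)^2 + 8 * (x * y)^2 := by
  unfold Fnv
  ring

theorem Fnv_threshold_nonneg (x y : ℝ) : 0 ≤ Fnv (29/12) x y := by
  have h : 0 ≤ 3 * Fnv (29/12) x y := by
    rw [three_mul_Fnv_eq_sum_sq]
    positivity
  linarith

theorem Fnv_positivity :
    (∀ t : ℝ, t < 29/12 → ∀ x y : ℝ, 0 < Fnv t x y) ∧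
    (∃ x y : ℝ, Fnv (29/12) x y = 0) := by
  constructor
  · intro t ht x y
    rw [Fnv_eq_add (29/12)]
    linarith [Fnv_threshold_nonneg x y]
  · -- every square in `three_mul_Fnv_eq_sum_sq` vanishes at (-1, 0)
    exact ⟨-1, 0, by norm_num [Fnv]⟩
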